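/- arXiv:math/0411231 — 6 statements merged into one kernel-verified Lean document; each statement's English description precedes it below -/
import Mathlib

section
/- For all positive integers n and i, there exist a unique integer j with 1 ≤ j ≤ i and a unique strictly decreasing sequence of integers n_i > n_{i-1} > ... > n_j ≥ j such that n = C(n_i, i) + C(n_{i-1}, i-1) + ... + C(n_j, j), where C(a,b) denotes the binomial coefficient. -/
/-- `msucc i n` is Macaulay's `n^{<i>}`: from the `i`-binomial expansion
`n = C(n_i,i) + ... + C(n_j,j)` (computed greedily), replace each term
`C(n_k,k)` by `C(n_k+1,k+1)`.  By convention `msucc i 0 = 0` and `msucc 0 n = 0`. -/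
def msucc : ℕ → ℕ → ℕ
  | 0, _ => 0
  | _ + 1, 0 => 0
  | (i + 1), (n + 1) =>
      let m := Nat.findGreatest (fun k => Nat.choose k (i + 1) ≤ n + 1) (n + i + 2)
      Nat.choose (m + 1) (i + 2) + msucc i ((n + 1) - Nat.choose m (i + 1))

/-- An (infinite) O-sequence: starts with 1 and satisfies Macaulay's growth condition. -/
def IsOSeq (h : ℕ → ℕ) : Prop :=
  h 0 = 1 ∧ ∀ d, 1 ≤ d → h (d + 1) ≤ msucc d (h d)

/-- A finite O-sequence of length `d` (entries of degree `0,…,d`). -/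
def FinOSeq (g : ℕ → ℕ) (d : ℕ) : Prop :=
  g 0 = 1 ∧ ∀ k, 1 ≤ k → k + 1 ≤ d → g (k + 1) ≤ msucc k (g k)

/-- First difference of a sequence, with `(Diff h) 0 = 1`. -/
def Diff (h : ℕ → ℕ) : ℕ → ℕ := fun k => if k = 0 then 1 else h k - h (k - 1)

/-- An SI-sequence of socle degree `e`: symmetric and its first half is differentiable. -/
def IsSISeq (h : ℕ → ℕ) (e : ℕ) : Prop :=
  (∀ i ≤ e, h i = h (e - i)) ∧ FinOSeq (Diff h) (e / 2)

/-- Unimodality of `(h 0, …, h e)`. -/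
def Unimodal (h : ℕ → ℕ) (e : ℕ) : Prop :=
  ∃ m ≤ e, (∀ i j, i ≤ j → j ≤ m → h i ≤ h j) ∧ (∀ i j, m ≤ i → i ≤ j → j ≤ e → h j ≤ h i)

/-!
The expansion is greedy. For `n_i > ⋯ > n_j ≥ j`, Pascal's rule telescopes to the tail bound
`C(n_{i-1}, i-1) + ⋯ + C(n_j, j) < C(n_i, i-1)`, so `C(n_i, i) ≤ n < C(n_i + 1, i)`: the top
coefficient `n_i` is forced to be the largest `m` with `C(m, i) ≤ n`. Existence and uniqueness
then follow by induction on `i`, applied to `n - C(n_i, i) < C(n_i, i - 1)`.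
-/

open Finset Function

namespace Nat

theorem lt_add_choose (n : ℕ) {k : ℕ} (hk : 0 < k) : n < (n + k).choose k := by
  induction k, hk using Nat.le_induction with
  | base => simp
  | succ k _ ih =>
    rw [← add_assoc, choose_succ_succ']
    omega

theorem exists_choose_le_lt_choose_succ {k : ℕ} (hk : 0 < k) (n : ℕ) :
    ∃ m, m.choose k ≤ n ∧ n < (m + 1).choose k := by
  have hex : ∃ m, n < (m + 1).choose k :=
    ⟨n + k - 1, by simpa [Nat.sub_add_cancel (by omega : 1 ≤ n + k)] using lt_add_choose n hk⟩
  refine ⟨Nat.find hex, ?_, Nat.find_spec hex⟩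
  rcases h : Nat.find hex with _ | m
  · simp [choose_eq_zero_of_lt hk]
  · exact not_lt.mp (Nat.find_min hex (h ▸ lt_add_one m))

theorem eq_of_choose_le_lt_choose_succ {a b k n : ℕ}
    (ha : a.choose k ≤ n) (ha' : n < (a + 1).choose k)
    (hb : b.choose k ≤ n) (hb' : n < (b + 1).choose k) : a = b :=
  le_antisymm (Nat.lt_add_one_iff.mp ((choose_mono k).reflect_lt (ha.trans_lt hb')))
    (Nat.lt_add_one_iff.mp ((choose_mono k).reflect_lt (hb.trans_lt ha')))

theorem sum_Icc_choose_update_succ_top {j i : ℕ} (hj : j ≤ i + 1) (c : ℕ → ℕ) (m : ℕ) :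
    ∑ k ∈ Icc j (i + 1), (update c (i + 1) m k).choose k =
      ∑ k ∈ Icc j i, (c k).choose k + m.choose (i + 1) := by
  rw [sum_Icc_succ_top hj, update_self]
  congr 1
  refine sum_congr rfl fun k hk => ?_
  rw [update_of_ne (by grind)]

/-- The coefficients `c i > ⋯ > c j ≥ j ≥ 1` of an `i`-binomial expansion
`C(c i, i) + ⋯ + C(c j, j)`. -/
structure IsCascade (j i : ℕ) (c : ℕ → ℕ) : Prop where
  one_le : 1 ≤ j
  le_top : j ≤ i
  le_apply : j ≤ c j
  lt_apply_succ : ∀ k, j ≤ k → k < i → c k < c (k + 1)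

namespace IsCascade

variable {j i : ℕ} {c : ℕ → ℕ}

theorem of_succ (hc : IsCascade j (i + 1) c) (hj : j ≤ i) : IsCascade j i c :=
  ⟨hc.one_le, hj, hc.le_apply, fun k hjk hki => hc.lt_apply_succ k hjk (by omega)⟩

theorem update_succ (hc : IsCascade j i c) {m : ℕ} (hm : c i < m) :
    IsCascade j (i + 1) (update c (i + 1) m) := by
  have hji := hc.le_top
  refine ⟨hc.one_le, by omega, ?_, fun k hjk hki => ?_⟩
  · rw [update_of_ne (by omega)]
    exact hc.le_apply
  · rw [update_of_ne (by omega)]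
    rcases (Nat.lt_add_one_iff.mp hki).lt_or_eq with hki | rfl
    · rw [update_of_ne (by omega)]
      exact hc.lt_apply_succ k hjk hki
    · rwa [update_self]

theorem choose_top_le_sum (hc : IsCascade j i c) :
    (c i).choose i ≤ ∑ k ∈ Icc j i, (c k).choose k :=
  single_le_sum (f := fun k => (c k).choose k) (fun _ _ => Nat.zero_le _)
    (mem_Icc.mpr ⟨hc.le_top, le_rfl⟩)

theorem sum_pos (hc : IsCascade j i c) : 0 < ∑ k ∈ Icc j i, (c k).choose k :=
  (choose_pos hc.le_apply).trans_le <|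
    single_le_sum (f := fun k => (c k).choose k) (fun _ _ => Nat.zero_le _)
      (mem_Icc.mpr ⟨le_rfl, hc.le_top⟩)

theorem sum_lt_choose_succ (hc : IsCascade j i c) :
    ∑ k ∈ Icc j i, (c k).choose k < (c i + 1).choose i := by
  induction i with
  | zero => exact absurd (hc.one_le.trans hc.le_top) (by omega)
  | succ i ih =>
    have hlow : ∑ k ∈ Icc j i, (c k).choose k < (c (i + 1)).choose i := by
      rcases Nat.lt_or_ge i j with hij | hji
      · rw [Icc_eq_empty_of_lt hij]
        exact choose_pos (by have := hc.le_apply; have := hc.le_top; grind)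
      · exact (ih (hc.of_succ hji)).trans_le
          (choose_le_choose i (hc.lt_apply_succ i hji (lt_add_one i)))
    rw [sum_Icc_succ_top hc.le_top, choose_succ_succ']
    omega

theorem eq_of_sum_eq {j' : ℕ} {c' : ℕ → ℕ} (hc : IsCascade j i c) (hc' : IsCascade j' i c')
    (h : ∑ k ∈ Icc j i, (c k).choose k = ∑ k ∈ Icc j' i, (c' k).choose k) :
    j = j' ∧ ∀ k ∈ Icc j i, c k = c' k := by
  induction i generalizing j j' with
  | zero => exact absurd (hc.one_le.trans hc.le_top) (by omega)
  | succ i ih =>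
    have htop : c (i + 1) = c' (i + 1) :=
      eq_of_choose_le_lt_choose_succ hc.choose_top_le_sum hc.sum_lt_choose_succ
        (hc'.choose_top_le_sum.trans_eq h.symm) (h.trans_lt hc'.sum_lt_choose_succ)
    rw [sum_Icc_succ_top hc.le_top, sum_Icc_succ_top hc'.le_top, htop,
      Nat.add_right_cancel_iff] at h
    have hle := hc.le_top
    have hle' := hc'.le_top
    rcases Nat.lt_or_ge i j with hij | hji <;> rcases Nat.lt_or_ge i j' with hij' | hj'i
    · refine ⟨by omega, fun k hk => ?_⟩
      rwa [show k = i + 1 by grind]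
    · rw [Icc_eq_empty_of_lt hij, sum_empty] at h
      exact absurd h (hc'.of_succ hj'i).sum_pos.ne
    · rw [Icc_eq_empty_of_lt hij', sum_empty] at h
      exact absurd h (hc.of_succ hji).sum_pos.ne'
    · obtain ⟨rfl, hagree⟩ := ih (hc.of_succ hji) (hc'.of_succ hj'i) h
      refine ⟨rfl, fun k hk => ?_⟩
      rcases (mem_Icc.mp hk).2.lt_or_eq with hki | rfl
      · exact hagree k (mem_Icc.mpr ⟨(mem_Icc.mp hk).1, Nat.lt_add_one_iff.mp hki⟩)
      · exact htop

end IsCascade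

theorem exists_cascade_sum_eq {i n : ℕ} (hi : 0 < i) (hn : 0 < n) :
    ∃ j c, IsCascade j i c ∧ (∀ k, (k < j ∨ i < k) → c k = 0) ∧
      n = ∑ k ∈ Icc j i, (c k).choose k := by
  induction i generalizing n with
  | zero => omega
  | succ i ih =>
    obtain ⟨m, hmn, hnm⟩ := exists_choose_le_lt_choose_succ (Nat.add_one_pos i) n
    rw [choose_succ_succ'] at hnm
    rcases hmn.eq_or_lt with hmn | hmn
    · refine ⟨i + 1, update 0 (i + 1) m, ⟨by omega, le_rfl, ?_, fun k _ _ => by omega⟩,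
        fun k hk => by rw [update_of_ne (by omega), Pi.zero_apply], ?_⟩
      · rw [update_self]
        exact not_lt.mp (choose_eq_zero_iff.not.mp (by omega))
      · rw [sum_Icc_choose_update_succ_top le_rfl, Icc_eq_empty_of_lt (lt_add_one i), sum_empty,
          hmn, zero_add]
    · have hi : 0 < i := Nat.pos_of_ne_zero fun hi => by
        subst hi
        rw [choose_zero_right] at hnm
        omega
      obtain ⟨j, c, hc, hzero, hsum⟩ := ih hi (n := n - m.choose (i + 1)) (by omega)
      have hcm : c i < m := (choose_mono i).reflect_lt
        (hc.choose_top_le_sum.trans_lt (by omega))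
      have hji := hc.le_top
      refine ⟨j, update c (i + 1) m, hc.update_succ hcm, fun k hk => ?_, ?_⟩
      · rw [update_of_ne (by omega)]
        exact hzero k (by omega)
      · rw [sum_Icc_choose_update_succ_top (by omega), ← hsum]
        omega

end Nat

/-- Existence and uniqueness of the `i`-binomial (Macaulay) expansion of `n`:
unique `j` with `1 ≤ j ≤ i` and unique strictly increasing (in the index)
values `c j < c (j+1) < … < c i` with `c j ≥ j` (normalized to `0` outside `[j,i]`)
such that `n = ∑_{k=j}^{i} C(c k, k)`. -/
theorem stmt0 (n i : ℕ) (hn : 0 < n) (hi : 0 < i) :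
    ∃! p : ℕ × (ℕ → ℕ),
      1 ≤ p.1 ∧ p.1 ≤ i ∧
      (∀ k, (k < p.1 ∨ i < k) → p.2 k = 0) ∧
      (∀ k, p.1 ≤ k → k < i → p.2 k < p.2 (k + 1)) ∧
      p.1 ≤ p.2 p.1 ∧
      n = ∑ k ∈ Finset.Icc p.1 i, Nat.choose (p.2 k) k := by
  obtain ⟨j, c, hc, hzero, hsum⟩ := Nat.exists_cascade_sum_eq hi hn
  refine ⟨(j, c), ⟨hc.one_le, hc.le_top, hzero, hc.lt_apply_succ, hc.le_apply, hsum⟩, ?_⟩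
  rintro ⟨j', c'⟩ ⟨hj', hj'i, hzero', hlt', hle', hsum'⟩
  obtain ⟨rfl, hagree⟩ :=
    Nat.IsCascade.eq_of_sum_eq ⟨hj', hj'i, hle', hlt'⟩ hc (hsum'.symm.trans hsum)
  refine Prod.ext rfl (funext fun k => ?_)
  by_cases hk : k ∈ Icc j' i
  · exact hagree k hk
  · have hout : k < j' ∨ i < k := by
      rw [mem_Icc] at hk
      omega
    exact (hzero' k hout).trans (hzero k hout).symm
end

section
/- For a fixed positive integer i, the map n ↦ n^{<i>} is strictly increasing on positive integers: if m < n then m^{<i>} < n^{<i>}. -/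
/- The greedy expansion of `n + 1` has a leading term `C(a, i+1)` with `C(a, i+1) ≤ n + 1 < C(a+1, i+1)`
and a remainder `r < C(a, i)`, so `(n+1)^{<i+1>} = C(a+1, i+2) + r^{<i>}`. By induction on `i`, if
`N < C(c, i)` then `N^{<i>} < C(c+1, i+1)`: the expansion of `N` cannot reach the next binomial
coefficient. Now compare `m < n` by their leading indices `a ≤ b`. If `a < b`, this bound puts
`m^{<i+1>}` below `C(a+2, i+2) ≤ C(b+1, i+2) ≤ n^{<i+1>}`; if `a = b`, the leading terms agree and
induction applies to the remainders. -/

-- The leading index exactly as `msucc` computes it, so that `msucc_succ_succ` is `rfl`.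
def macaulayTop (i n : ℕ) : ℕ :=
  Nat.findGreatest (fun k => Nat.choose k (i + 1) ≤ n + 1) (n + i + 2)

theorem msucc_succ_succ (i n : ℕ) :
    msucc (i + 1) (n + 1) = (macaulayTop i n + 1).choose (i + 2) +
      msucc i (n + 1 - (macaulayTop i n).choose (i + 1)) :=
  rfl

theorem lt_choose_add_add (i n : ℕ) : n + 1 < (n + i + 2).choose (i + 1) :=
  calc n + 1 < (n + 2).choose (n + 1) := by rw [Nat.choose_succ_self_right]; omega
    _ ≤ (n + 1 + (i + 1)).choose (n + 1) := Nat.choose_le_choose _ (by omega)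
    _ = (n + i + 2).choose (i + 1) := by rw [Nat.choose_symm_add]; ring_nf

theorem le_macaulayTop_of_choose_le {i n a : ℕ} (h : a.choose (i + 1) ≤ n + 1) :
    a ≤ macaulayTop i n := by
  refine Nat.le_findGreatest ?_ h
  by_contra! ha
  have := Nat.choose_le_choose (i + 1) ha.le
  have := lt_choose_add_add i n
  omega

theorem le_macaulayTop (i n : ℕ) : i + 1 ≤ macaulayTop i n :=
  le_macaulayTop_of_choose_le (by simp)

theorem choose_macaulayTop_le (i n : ℕ) : (macaulayTop i n).choose (i + 1) ≤ n + 1 :=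
  Nat.findGreatest_spec (m := i + 1) (P := fun k => k.choose (i + 1) ≤ n + 1) (by omega) (by simp)

theorem lt_choose_succ_macaulayTop (i n : ℕ) : n + 1 < (macaulayTop i n + 1).choose (i + 1) := by
  by_contra! h
  have := le_macaulayTop_of_choose_le h
  omega

theorem sub_choose_macaulayTop_lt (i n : ℕ) :
    n + 1 - (macaulayTop i n).choose (i + 1) < (macaulayTop i n).choose i := by
  have hle := choose_macaulayTop_le i n
  have hlt := lt_choose_succ_macaulayTop i n
  rw [Nat.choose_succ_succ'] at hlt
  omega

theorem msucc_succ_succ_pos (i n : ℕ) : 0 < msucc (i + 1) (n + 1) := by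
  rw [msucc_succ_succ]
  have := le_macaulayTop i n
  have : 0 < (macaulayTop i n + 1).choose (i + 2) := Nat.choose_pos (by omega)
  omega

theorem msucc_lt_choose {i N c : ℕ} (hN : N < c.choose i) :
    msucc i N < (c + 1).choose (i + 1) := by
  induction i generalizing N c with
  | zero => simp [msucc]
  | succ i ih =>
    have hc : i + 1 ≤ c := Nat.choose_ne_zero_iff.mp (by omega)
    rcases N with _ | n
    · exact Nat.choose_pos (by omega)
    have hac : macaulayTop i n < c :=
      (Nat.choose_mono (i + 1)).reflect_lt ((choose_macaulayTop_le i n).trans_lt hN)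
    have hrem := ih (sub_choose_macaulayTop_lt i n)
    rw [msucc_succ_succ]
    generalize macaulayTop i n = a at hac hrem ⊢
    calc (a + 1).choose (i + 2) + msucc i (n + 1 - a.choose (i + 1))
        < (a + 1).choose (i + 2) + (a + 1).choose (i + 1) := by omega
      _ = (a + 2).choose (i + 2) := by rw [Nat.choose_succ_succ' (a + 1) (i + 1)]; ring
      _ ≤ (c + 1).choose (i + 2) := Nat.choose_le_choose _ (by omega)

theorem msucc_lt_msucc {i m n c : ℕ} (hmn : m < n) (hn : n < c.choose i) :
    msucc i m < msucc i n := by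
  induction i generalizing m n c with
  | zero => rw [Nat.choose_zero_right] at hn; omega
  | succ i ih =>
    obtain ⟨n, rfl⟩ : ∃ n', n = n' + 1 := ⟨n - 1, by omega⟩
    rcases m with _ | m
    · exact msucc_succ_succ_pos i n
    have hab : macaulayTop i m ≤ macaulayTop i n :=
      le_macaulayTop_of_choose_le ((choose_macaulayTop_le i m).trans hmn.le)
    rcases hab.lt_or_eq with hab | hab
    · calc msucc (i + 1) (m + 1)
          < (macaulayTop i m + 2).choose (i + 2) :=
            msucc_lt_choose (lt_choose_succ_macaulayTop i m)
        _ ≤ (macaulayTop i n + 1).choose (i + 2) := Nat.choose_le_choose _ (by omega)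
        _ ≤ msucc (i + 1) (n + 1) := by rw [msucc_succ_succ]; exact Nat.le_add_right _ _
    · have hle := hab ▸ choose_macaulayTop_le i m
      rw [msucc_succ_succ, msucc_succ_succ, hab]
      exact Nat.add_lt_add_left (ih (by omega) (sub_choose_macaulayTop_lt i n)) _

theorem msucc_strictMono (i : ℕ) : StrictMono (msucc (i + 1)) := fun _ n hmn =>
  msucc_lt_msucc hmn ((Nat.lt_succ_self n).trans (lt_choose_add_add i n))

theorem stmt3_general (i m n : ℕ) (hi : 0 < i) (hmn : m < n) :
    msucc i m < msucc i n := by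
  obtain ⟨j, rfl⟩ : ∃ j, i = j + 1 := ⟨i - 1, by omega⟩
  exact msucc_strictMono j hmn

/-- For fixed positive `i`, the map `n ↦ n^{<i>}` is strictly increasing on positive integers. -/
theorem stmt3 (i m n : ℕ) (hi : 0 < i) (hm : 0 < m) (hmn : m < n) :
    msucc i m < msucc i n :=
  stmt3_general i m n hi hmn
end

section
/- Let h = (h_0, h_1, h_2, ...) be an O-sequence with h_0 = 1 and h_1 ≤ 2. If h_i ≤ i for some i ≥ 1, then h_{i+1} ≤ h_i; consequently h_j ≤ h_i for all j ≥ i. -/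
/-- For `n ≤ i` the `i`-binomial expansion is `n = C(i,i) + C(i-1,i-1) + ⋯ + C(i-n+1,i-n+1)`,
so every term is `1` and stays `1` under `C(a,b) ↦ C(a+1,b+1)`. -/
theorem msucc_eq_self_of_le {i n : ℕ} (hn : n ≤ i) : msucc i n = n := by
  induction i generalizing n with
  | zero => rw [Nat.le_zero.mp hn, msucc]
  | succ i ih =>
    cases n with
    | zero => rfl
    | succ n =>
      have htop : Nat.findGreatest (fun k => Nat.choose k (i + 1) ≤ n + 1) (n + i + 2) = i + 1 := by
        refine Nat.findGreatest_eq_iff.mpr ⟨by omega, fun _ => by simp, fun k hk _ hchoose => ?_⟩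
        have : Nat.choose (i + 2) (i + 1) ≤ Nat.choose k (i + 1) := Nat.choose_le_choose _ hk
        rw [Nat.choose_succ_self_right] at this
        omega
      rw [msucc]
      simp only [htop, Nat.choose_self, Nat.add_sub_cancel, ih (Nat.le_of_succ_le_succ hn)]
      omega

namespace IsOSeq

variable {h : ℕ → ℕ}

theorem succ_le_of_le_index (hO : IsOSeq h) {j : ℕ} (hj : 1 ≤ j) (hle : h j ≤ j) :
    h (j + 1) ≤ h j :=
  msucc_eq_self_of_le hle ▸ hO.2 j hj

theorem le_of_le_index (hO : IsOSeq h) {i : ℕ} (hle : h i ≤ i) {j : ℕ} (hij : i ≤ j) :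
    h j ≤ h i ∧ h j ≤ j := by
  have hi : 1 ≤ i := Nat.pos_of_ne_zero (by rintro rfl; simp [hO.1] at hle)
  induction j, hij using Nat.le_induction with
  | base => exact ⟨le_rfl, hle⟩
  | succ j hij ih =>
    have hstep := hO.succ_le_of_le_index (hi.trans hij) ih.2
    exact ⟨hstep.trans ih.1, by omega⟩

end IsOSeq

theorem stmt6_general (h : ℕ → ℕ) (hO : IsOSeq h)
    (i : ℕ) (hle : h i ≤ i) :
    h (i + 1) ≤ h i ∧ ∀ j, i ≤ j → h j ≤ h i :=
  ⟨(hO.le_of_le_index hle i.le_succ).1, fun _ hij => (hO.le_of_le_index hle hij).1⟩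

/-- An O-sequence with `h 0 = 1`, `h 1 ≤ 2` which satisfies `h i ≤ i` for some `i ≥ 1`
is non-increasing from `i` on. -/
theorem stmt6 (h : ℕ → ℕ) (hO : IsOSeq h) (h1 : h 1 ≤ 2)
    (i : ℕ) (hi : 1 ≤ i) (hle : h i ≤ i) :
    h (i + 1) ≤ h i ∧ ∀ j, i ≤ j → h j ≤ h i :=
  stmt6_general h hO i hle
end

section
/- Let h = (h_0, h_1, h_2, ...) be an O-sequence with h_0 = 1 and h_1 = 2. For every i ≥ 1, either h_i = i+1 (the generic value) or the sequence is non-increasing from index i on, i.e. h_j ≥ h_{j+1} for all j ≥ i. -/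
lemma msucc_succ_succ_of_choose_le_of_lt {i n m : ℕ} (hm : m ≤ n + i + 2)
    (hle : m.choose (i + 1) ≤ n + 1) (hlt : n + 1 < (m + 1).choose (i + 1)) :
    msucc (i + 1) (n + 1) = (m + 1).choose (i + 2) + msucc i (n + 1 - m.choose (i + 1)) := by
  have hgreatest : Nat.findGreatest (fun k => k.choose (i + 1) ≤ n + 1) (n + i + 2) = m := by
    refine Nat.findGreatest_eq_iff.mpr ⟨hm, fun _ => hle, fun k hk _ hk_le => ?_⟩
    exact absurd (hlt.trans_le (Nat.choose_le_choose _ hk)) (not_lt.mpr hk_le)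
  simp only [msucc, hgreatest]

lemma msucc_zero_right (d : ℕ) : msucc d 0 = 0 := by
  cases d <;> rfl

lemma msucc_of_le {d n : ℕ} (hn : n ≤ d) : msucc d n = n := by
  induction d generalizing n with
  | zero => rw [Nat.le_zero.mp hn, msucc_zero_right]
  | succ i ih =>
    obtain _ | n := n
    · exact msucc_zero_right _
    · rw [msucc_succ_succ_of_choose_le_of_lt (m := i + 1) (by omega) (by simp)
        (by rw [Nat.choose_succ_self_right]; omega),
        Nat.choose_self, Nat.choose_self, Nat.add_sub_cancel, ih (by omega)]
      omega

lemma msucc_succ_self {d : ℕ} (hd : 1 ≤ d) : msucc d (d + 1) = d + 2 := by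
  obtain ⟨i, rfl⟩ := Nat.exists_eq_add_of_le' hd
  have hlt : i + 2 < (i + 3).choose (i + 1) := by
    rw [Nat.choose_succ_succ, Nat.choose_succ_self_right]
    have := Nat.choose_pos (show i ≤ i + 2 by omega)
    omega
  rw [msucc_succ_succ_of_choose_le_of_lt (m := i + 2) (by omega)
    (by rw [Nat.choose_succ_self_right]) hlt]
  simp only [Nat.choose_succ_self_right, Nat.sub_self, msucc_zero_right]

namespace IsOSeq

variable {h : ℕ → ℕ}

lemma succ_le_of_le_self (hO : IsOSeq h) {d : ℕ} (hd : 1 ≤ d) (hle : h d ≤ d) :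
    h (d + 1) ≤ h d :=
  msucc_of_le hle ▸ hO.2 d hd

lemma le_self_of_le_self (hO : IsOSeq h) {i j : ℕ} (hi : 1 ≤ i) (hij : i ≤ j) (hle : h i ≤ i) :
    h j ≤ j := by
  induction j, hij using Nat.le_induction with
  | base => exact hle
  | succ k hk ih => have := hO.succ_le_of_le_self (hi.trans hk) ih; omega

lemma le_add_one (hO : IsOSeq h) (h1 : h 1 ≤ 2) {d : ℕ} (hd : 1 ≤ d) : h d ≤ d + 1 := by
  induction d, hd using Nat.le_induction with
  | base => exact h1
  | succ k hk ih =>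
    rcases ih.lt_or_eq with hlt | heq
    · have := hO.succ_le_of_le_self hk (by omega); omega
    · simpa only [heq, msucc_succ_self hk] using hO.2 k hk

end IsOSeq

/-- An O-sequence with `h 0 = 1`, `h 1 = 2`: for every `i ≥ 1`, either `h i = i + 1`
(the generic value) or the sequence is non-increasing from index `i` on. -/
theorem stmt7 (h : ℕ → ℕ) (hO : IsOSeq h) (h1 : h 1 = 2) :
    ∀ i, 1 ≤ i → h i = i + 1 ∨ ∀ j, i ≤ j → h (j + 1) ≤ h j := by
  intro i hi
  refine or_iff_not_imp_left.mpr fun hne j hij => ?_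
  have hle_i : h i ≤ i := by have := hO.le_add_one h1.le hi; omega
  exact hO.succ_le_of_le_self (hi.trans hij) (hO.le_self_of_le_self hi hij hle_i)
end

section
/- Let h = (h_0 = 1, h_1, ..., h_e) be a finite sequence of positive integers that is symmetric (h_i = h_{e-i} for all 0 ≤ i ≤ e), satisfies Macaulay's growth condition, and has h_1 = 2. Then h is an SI-sequence; explicitly, h_i = min(i+1, t, e-i+1) for some integer t, and in particular h is unimodal and the first difference of its first half is an O-sequence. -/
-- `d + 2 = C(d+2, d+1)` is a single binomial term, so `(d + 2)^{<d+1>} = C(d+3, d+2)`.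
lemma msucc_add_one_add_two (d : ℕ) : msucc (d + 1) (d + 2) = d + 3 := by
  have hbig : d + 3 ≤ Nat.choose (d + 3) (d + 1) := by
    rw [Nat.choose_symm_of_eq_add (by omega : d + 3 = d + 1 + 2), Nat.choose_two_right,
      Nat.le_div_iff_mul_le (by omega), show d + 3 - 1 = d + 2 by omega]
    nlinarith
  have hfg : Nat.findGreatest (fun k => Nat.choose k (d + 1) ≤ d + 1 + 1) (d + 1 + d + 2)
      = d + 2 := by
    rw [Nat.findGreatest_eq_iff]
    refine ⟨by omega, fun _ => by simp [Nat.choose_succ_self_right], fun k hk _ hP => ?_⟩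
    have : Nat.choose (d + 3) (d + 1) ≤ Nat.choose k (d + 1) := Nat.choose_le_choose _ (by omega)
    omega
  rw [msucc]
  simp only [hfg, Nat.choose_succ_self_right]
  rw [show d + 1 + 1 - (d + 2) = 0 by omega, msucc_zero_right]

section Macaulay

variable {h : ℕ → ℕ} {e : ℕ} (hmac : ∀ d, 1 ≤ d → d + 1 ≤ e → h (d + 1) ≤ msucc d (h d))
include hmac

lemma le_add_one_of_macaulay (h1 : h 1 ≤ 2) {d : ℕ} (hd : 1 ≤ d) (hde : d ≤ e) :
    h d ≤ d + 1 := by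
  induction d, hd using Nat.le_induction with
  | base => exact h1
  | succ d hd ih =>
    have hgrow := hmac d hd hde
    rcases (ih (by omega)).lt_or_eq with hlt | heq
    · rw [msucc_of_le (by omega)] at hgrow
      omega
    · obtain ⟨d, rfl⟩ : ∃ d', d = d' + 1 := ⟨d - 1, by omega⟩
      rw [heq, msucc_add_one_add_two] at hgrow
      omega

lemma le_of_apply_le_self {i j : ℕ} (hi : 1 ≤ i) (hij : i ≤ j) (hje : j ≤ e) (hhi : h i ≤ i) :
    h j ≤ h i := by
  induction j, hij using Nat.le_induction with
  | base => exact le_rfl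
  | succ j hij ih =>
    have hgrow := hmac j (by omega) hje
    rw [msucc_of_le (by have := ih (by omega); omega)] at hgrow
    exact hgrow.trans (ih (by omega))

lemma exists_linear_then_antitone (he : 1 ≤ e) (h0 : h 0 = 1) (h1 : h 1 = 2) :
    ∃ s ≤ e, (∀ i ≤ s, h i = i + 1) ∧ ∀ i j, s ≤ i → i ≤ j → j ≤ e → h j ≤ h i := by
  obtain ⟨s, hse, hss, hmax⟩ : ∃ s ≤ e, h s = s + 1 ∧ ∀ i, s < i → i ≤ e → ¬h i = i + 1 :=
    ⟨_, Nat.findGreatest_le e,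
      Nat.findGreatest_spec (P := fun i => h i = i + 1) he (by omega),
      fun _ => Nat.findGreatest_is_greatest⟩
  have hbound : ∀ d, 1 ≤ d → d ≤ e → h d ≤ d + 1 := fun _ hd hde =>
    le_add_one_of_macaulay hmac (by omega) hd hde
  have hbelow : ∀ i, s < i → i ≤ e → h i ≤ i := fun i hsi hie => by
    have := hmax i hsi hie
    have := hbound i (by omega) hie
    omega
  refine ⟨s, hse, fun i his => ?_, fun i j hsi hij hje => ?_⟩
  · by_contra hne
    rcases Nat.eq_zero_or_pos i with rfl | hi
    · exact hne h0
    have hii : h i ≤ i := by have := hbound i hi (by omega); omega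
    have := le_of_apply_le_self hmac hi his hse hii
    omega
  · rcases hij.lt_or_eq with hij | rfl
    · rcases hsi.lt_or_eq with hsi | rfl
      · exact le_of_apply_le_self hmac (by omega) hij.le hje (hbelow i hsi (by omega))
      · have hnext := hbelow (s + 1) (by omega) (by omega)
        have := le_of_apply_le_self hmac (i := s + 1) (by omega) hij hje hnext
        omega
    · exact le_rfl

end Macaulay

lemma eq_min_of_symm_of_linear_then_antitone {h : ℕ → ℕ} {e s : ℕ}
    (hsym : ∀ i ≤ e, h i = h (e - i)) (hse : s ≤ e) (hlin : ∀ i ≤ s, h i = i + 1)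
    (hanti : ∀ i j, s ≤ i → i ≤ j → j ≤ e → h j ≤ h i) :
    ∀ i ≤ e, h i = min (i + 1) (min (s + 1) (e - i + 1)) := by
  have hss := hlin s le_rfl
  have h2s : 2 * s ≤ e := by
    by_contra! hlt
    have := hsym s hse
    have := hlin (e - s) (by omega)
    omega
  intro i hie
  by_cases his : i ≤ s
  · rw [hlin i his]
    omega
  by_cases hies : i ≤ e - s
  · have := hanti s i le_rfl (by omega) hie
    have := hanti i (e - s) (by omega) hies (by omega)
    have := hsym s hse
    omega
  · rw [hsym i hie, hlin (e - i) (by omega)]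
    omega

lemma unimodal_of_eq_min {h : ℕ → ℕ} {e t : ℕ}
    (hform : ∀ i ≤ e, h i = min (i + 1) (min t (e - i + 1))) : Unimodal h e := by
  refine ⟨e / 2, Nat.div_le_self e 2, fun i j hij hje => ?_, fun i j hei hij hje => ?_⟩ <;>
  · rw [hform i (by omega), hform j (by omega)]
    omega

lemma finOSeq_diff_of_eq_min {h : ℕ → ℕ} {d t : ℕ} (hform : ∀ i ≤ d, h i = min (i + 1) t) :
    FinOSeq (Diff h) d := by
  refine ⟨rfl, fun k hk hkd => ?_⟩
  have hDk : Diff h k = h k - h (k - 1) := if_neg (by omega)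
  have hDk1 : Diff h (k + 1) = h (k + 1) - h k := rfl
  rw [hDk, hDk1, hform (k + 1) hkd, hform k (by omega), hform (k - 1) (by omega)]
  by_cases hkt : k + 2 ≤ t
  · rw [show min (k + 1 + 1) t - min (k + 1) t = 1 by omega,
      show min (k + 1) t - min (k - 1 + 1) t = 1 by omega, msucc_of_le hk]
  · rw [show min (k + 1 + 1) t - min (k + 1) t = 0 by omega]
    exact Nat.zero_le _

theorem stmt8_general (e : ℕ) (he : 1 ≤ e) (h : ℕ → ℕ)
    (h0 : h 0 = 1) (h1 : h 1 = 2)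
    (hsym : ∀ i ≤ e, h i = h (e - i))
    (hmac : ∀ d, 1 ≤ d → d + 1 ≤ e → h (d + 1) ≤ msucc d (h d)) :
    (∃ t : ℕ, ∀ i ≤ e, h i = min (i + 1) (min t (e - i + 1))) ∧
    Unimodal h e ∧ IsSISeq h e := by
  obtain ⟨s, hse, hlin, hanti⟩ := exists_linear_then_antitone hmac he h0 h1
  have hform := eq_min_of_symm_of_linear_then_antitone hsym hse hlin hanti
  have hhalf : ∀ i ≤ e / 2, h i = min (i + 1) (s + 1) := fun i hi => by
    rw [hform i (by omega)]
    omega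
  exact ⟨⟨s + 1, hform⟩, unimodal_of_eq_min hform, hsym, finOSeq_diff_of_eq_min hhalf⟩

/-- Codimension 2 case of Stanley's theorem: a symmetric sequence of positive integers
with `h 0 = 1`, `h 1 = 2` satisfying Macaulay's growth condition is
`h i = min (i+1) (min t (e-i+1))` for some `t`; in particular it is unimodal and
an SI-sequence. -/
theorem stmt8 (e : ℕ) (he : 1 ≤ e) (h : ℕ → ℕ)
    (hpos : ∀ i ≤ e, 0 < h i) (h0 : h 0 = 1) (h1 : h 1 = 2)
    (hsym : ∀ i ≤ e, h i = h (e - i))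
    (hmac : ∀ d, 1 ≤ d → d + 1 ≤ e → h (d + 1) ≤ msucc d (h d)) :
    (∃ t : ℕ, ∀ i ≤ e, h i = min (i + 1) (min t (e - i + 1))) ∧
    Unimodal h e ∧ IsSISeq h e :=
  stmt8_general e he h h0 h1 hsym hmac
end

section
/- Let e ≥ 2, let h = (1, 3, h_2, ..., h_e) be a symmetric sequence of positive integers (h_i = h_{e-i}), and let i ≤ ⌊e/2⌋ with h_i < C(i+2, 2). Suppose there exists a sequence a = (a_1 = 1, a_2, ..., a_e) with a_k = a_{e+1-k} for all 1 ≤ k ≤ e, which is an SI-sequence (as an h-vector with socle degree e-1 after reindexing), such that Δ defined by Δ_0 = 1, Δ_1 = 2, Δ_k = h_k - a_k for 2 ≤ k ≤ e is an O-sequence. If a_i = C(i+1, 2), then h_{i-1} = C(i+1, 2) and h_i - h_{i-1} ≤ h_{i-1} - h_{i-2}. -/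
/-!
The hypotheses force both `Δ` and the first difference of `a` to grow by at most one per degree,
starting from `2`, so `a k ≤ C(k+1,2)` and `h k ≤ a k + (k+1) ≤ C(k+2,2)` in the relevant range.
Symmetry of `h` and `a` gives the reverse bound `h (i-1) = h (e+1-i) ≥ a (e+1-i) = a i = C(i+1,2)`,
and the difference inequality follows from `h i < C(i+2,2)` and `h (i-2) ≤ C(i,2)`.
-/

lemma msucc_zero (k : ℕ) : msucc k 0 = 0 := by
  cases k <;> rfl

lemma Nat.findGreatest_choose_le_eq {k n m b : ℕ} (hmb : m ≤ b) (hle : m.choose k ≤ n)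
    (hlt : n < (m + 1).choose k) : Nat.findGreatest (fun x => x.choose k ≤ n) b = m := by
  rw [Nat.findGreatest_eq_iff]
  exact ⟨hmb, fun _ => hle, fun x hx _ => not_le.2 (hlt.trans_le (Nat.choose_le_choose k hx))⟩

/-- For `n ≤ k` the `k`-binomial expansion of `n` is `C(k,k) + ⋯ + C(k-n+1,k-n+1)`, so `n^{<k>} = n`,
and `(k+1)^{<k>} = C(k+2,k+1) = k+2`. -/
lemma msucc_le_add_one {k n : ℕ} (hn : n ≤ k + 1) : msucc k n ≤ n + 1 := by
  induction k generalizing n with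
  | zero => simp [msucc]
  | succ k ih =>
    rcases n with _ | n
    · simp [msucc_zero]
    rcases (show n ≤ k ∨ n = k + 1 by omega) with hnk | rfl
    · rw [msucc, Nat.findGreatest_choose_le_eq (m := k + 1) (by omega) (by simp)
        (by rw [Nat.choose_succ_self_right]; omega)]
      simp only [Nat.choose_self, Nat.add_sub_cancel]
      have := ih (n := n) (by omega)
      omega
    · have hlt : k + 2 < (k + 3).choose (k + 1) := by
        rw [Nat.choose_succ_succ, Nat.choose_succ_self_right]
        have := Nat.choose_pos (show k ≤ k + 2 by omega)
        omega
      rw [msucc, Nat.findGreatest_choose_le_eq (m := k + 2) (by omega)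
        (by rw [Nat.choose_succ_self_right]) hlt]
      simp [Nat.choose_succ_self_right, msucc_zero]

lemma FinOSeq.le_add_one {g : ℕ → ℕ} {d : ℕ} (hg : FinOSeq g d) (h1 : g 1 ≤ 2) {k : ℕ}
    (hk : 1 ≤ k) (hkd : k ≤ d) : g k ≤ k + 1 := by
  induction k, hk using Nat.le_induction with
  | base => exact h1
  | succ k hk ih =>
    have := hg.2 k hk hkd
    have := msucc_le_add_one (ih (by omega))
    omega

lemma choose_succ_two (n : ℕ) : (n + 1).choose 2 = n.choose 2 + n := by
  rw [Nat.choose_succ_succ, Nat.choose_one_right, add_comm]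

lemma le_choose_two_of_diff_le {f : ℕ → ℕ} {n : ℕ} (hf0 : f 0 ≤ 1)
    (hdiff : ∀ k, 1 ≤ k → k ≤ n → Diff f k ≤ k + 1) {k : ℕ} (hkn : k ≤ n) :
    f k ≤ (k + 2).choose 2 := by
  induction k with
  | zero => simpa using hf0
  | succ k ih =>
    have hd := hdiff (k + 1) (by omega) hkn
    simp only [Diff, Nat.add_one_ne_zero, if_false, Nat.add_sub_cancel] at hd
    calc f (k + 1) ≤ f k + (k + 2) := by omega
      _ ≤ (k + 2).choose 2 + (k + 2) := by gcongr; exact ih (by omega)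
      _ = (k + 1 + 2).choose 2 := (choose_succ_two (k + 2)).symm

lemma IsSISeq.le_choose_two {f : ℕ → ℕ} {e : ℕ} (hf : IsSISeq f e) (hf0 : f 0 = 1)
    (hf1 : f 1 ≤ 3) {k : ℕ} (hk : k ≤ e / 2) : f k ≤ (k + 2).choose 2 := by
  refine le_choose_two_of_diff_le hf0.le (fun l hl hle => hf.2.le_add_one ?_ hl hle) hk
  simp only [Diff, one_ne_zero, if_false, Nat.sub_self, hf0]
  omega

lemma le_choose_two_of_sub_le {h a : ℕ → ℕ} {e k : ℕ}
    (hΔ : FinOSeq (fun k => if k = 0 then 1 else if k = 1 then 2 else h k - a k) e)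
    (hak : a k ≤ (k + 1).choose 2) (hk : 2 ≤ k) (hke : k ≤ e) : h k ≤ (k + 2).choose 2 := by
  have hΔk := hΔ.le_add_one (by simp) (k := k) (by omega) hke
  simp only [show k ≠ 0 by omega, show k ≠ 1 by omega, if_false] at hΔk
  calc h k ≤ (k + 1).choose 2 + (k + 1) := by omega
    _ = (k + 2).choose 2 := (choose_succ_two _).symm

theorem stmt11_general (e : ℕ) (h a : ℕ → ℕ) (i : ℕ)
    (h0 : h 0 = 1) (h1 : h 1 = 3)
    (hsym : ∀ k ≤ e, h k = h (e - k))
    (hie : i ≤ e / 2) (hgen : h i < Nat.choose (i + 2) 2)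
    (ha1 : a 1 = 1)
    (hasym : ∀ k, 1 ≤ k → k ≤ e → a k = a (e + 1 - k))
    (haSI : IsSISeq (fun m => a (m + 1)) (e - 1))
    (hah : ∀ k, 2 ≤ k → k ≤ e → a k ≤ h k)
    (hΔ : FinOSeq (fun k => if k = 0 then 1 else if k = 1 then 2 else h k - a k) e)
    (hai : a i = Nat.choose (i + 1) 2) :
    h (i - 1) = Nat.choose (i + 1) 2 ∧
    (h i : ℤ) - h (i - 1) ≤ (h (i - 1) : ℤ) - h (i - 2) := by
  have hi : 2 ≤ i := by
    by_contra! hi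
    interval_cases i
    · simp [h0] at hgen
    · simp [h1] at hgen
  obtain ⟨j, rfl⟩ := Nat.exists_eq_add_of_le' hi
  show h (j + 1) = (j + 3).choose 2 ∧ (h (j + 2) : ℤ) - h (j + 1) ≤ h (j + 1) - h j
  have ha2 : a 2 ≤ 3 := calc
    a 2 = a (e - 1) := by rw [hasym 2 (by omega) (by omega), show e + 1 - 2 = e - 1 by omega]
    _ ≤ h (e - 1) := hah _ (by omega) (by omega)
    _ = 3 := by rw [hsym _ (by omega), Nat.sub_sub_self (by omega), h1]
  have ha : ∀ m ≤ j, a (m + 1) ≤ (m + 2).choose 2 := fun m hm =>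
    haSI.le_choose_two (f := fun m => a (m + 1)) ha1 ha2 (by omega)
  have hh : ∀ k ≤ j + 1, h k ≤ (k + 2).choose 2 := by
    intro k hk
    rcases Nat.lt_or_ge k 2 with hk2 | hk2
    · interval_cases k <;> simp [h0, h1]
    obtain ⟨m, rfl⟩ := Nat.exists_eq_add_of_le' (show 1 ≤ k by omega)
    exact le_choose_two_of_sub_le hΔ (ha m (by omega)) hk2 (by omega)
  have hlow : (j + 3).choose 2 ≤ h (j + 1) := by
    rw [hsym (j + 1) (by omega), ← hai, hasym (j + 2) (by omega) (by omega),
      show e + 1 - (j + 2) = e - (j + 1) by omega]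
    exact hah _ (by omega) (by omega)
  have hj : h j ≤ (j + 2).choose 2 := hh j (by omega)
  have hj1 : h (j + 1) ≤ (j + 3).choose 2 := hh (j + 1) le_rfl
  have hgen' : h (j + 2) < (j + 4).choose 2 := hgen
  have p3 : (j + 3).choose 2 = (j + 2).choose 2 + (j + 2) := choose_succ_two _
  have p4 : (j + 4).choose 2 = (j + 3).choose 2 + (j + 3) := choose_succ_two _
  omega

/-- One case of the differentiability step in the proof of Stanley's codimension 3
theorem: with `h, a, Δ` as in the proof and `a i = C(i+1,2)`, one gets
`h (i-1) = C(i+1,2)` and `h i - h (i-1) ≤ h (i-1) - h (i-2)`. -/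
theorem stmt11 (e : ℕ) (he : 2 ≤ e) (h a : ℕ → ℕ) (i : ℕ)
    (h0 : h 0 = 1) (h1 : h 1 = 3) (hpos : ∀ k ≤ e, 0 < h k)
    (hsym : ∀ k ≤ e, h k = h (e - k))
    (hie : i ≤ e / 2) (hgen : h i < Nat.choose (i + 2) 2)
    (ha1 : a 1 = 1)
    (hasym : ∀ k, 1 ≤ k → k ≤ e → a k = a (e + 1 - k))
    (haSI : IsSISeq (fun m => a (m + 1)) (e - 1))
    (hah : ∀ k, 2 ≤ k → k ≤ e → a k ≤ h k)
    (hΔ : FinOSeq (fun k => if k = 0 then 1 else if k = 1 then 2 else h k - a k) e)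
    (hai : a i = Nat.choose (i + 1) 2) :
    h (i - 1) = Nat.choose (i + 1) 2 ∧
    (h i : ℤ) - h (i - 1) ≤ (h (i - 1) : ℤ) - h (i - 2) :=
  stmt11_general e h a i h0 h1 hsym hie hgen ha1 hasym haSI hah hΔ hai
end
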